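/- Combined estimate: under the separation hypotheses |y_i − x_j| > d − 2c, |y_i − y_j| > d − 2c for i ≠ j, error bounds |y_j − x_j| ≤ c·ε with ε = q^{4^k} ≤ 1, and with M = (1+c/(d−2c))^n − 1, N = (1+n(c/(d−2c))²)^{n−1} − 1, the quantity Y_{ij} = 1 − ((y_i − x_j)/(y_i − y_j))·R_j·Z_j satisfies |Y_{ij}| ≤ ε·[c/(d−2c) + (1 + cε/(d−2c))(εN + M(1 + ε²N))], where R_j = (1 + ((y_j−x_j)/α_j)∑_{l≠j} α_l(x_l−y_l)/((y_j−x_l)(y_j−y_l)))^{α_j−1} and Z_j = ∏_{s≠j}((y_j−x_s)/(y_j−y_s))^{α_s}. -/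

import Mathlib

/-!
Each of the three factors is `1 + O(ε)`: the first one and the factors of `Z_j` are quotients
`(a - u)/(a - b) = 1 + (b - u)/(a - b)` with `‖b - u‖ ≤ cε` and `‖a - b‖ > d - 2c`, while the base
of `R_j` differs from `1` by a product of two such small quantities. Errors propagate through
products by `‖∏ wᵢ - 1‖ ≤ ∏ (1 + bᵢ) - 1`, and the factor `ε` (resp. `ε²`) is pulled out of
`(1 + εt)^q - 1 ≤ ε((1 + t)^q - 1)`, which is convexity of `x ↦ x^q`.
-/

open Finset

section NormedRing

variable {R : Type*} [NormedRing R] [NormOneClass R]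

lemma norm_le_one_add_of_norm_sub_one_le {w : R} {t : ℝ} (hw : ‖w - 1‖ ≤ t) : ‖w‖ ≤ 1 + t := by
  linarith [norm_le_norm_sub_add w 1, norm_one (α := R)]

lemma norm_mul_mul_sub_one_le {A B C : R} {a b c : ℝ} (hA : ‖A - 1‖ ≤ a) (hB : ‖B - 1‖ ≤ b)
    (hC : ‖C - 1‖ ≤ c) : ‖A * B * C - 1‖ ≤ a + (1 + a) * b + (1 + a) * (1 + b) * c := by
  have hA' := norm_le_one_add_of_norm_sub_one_le hA
  have hB' := norm_le_one_add_of_norm_sub_one_le hB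
  have ha : 0 ≤ a := (norm_nonneg _).trans hA
  have hb : 0 ≤ b := (norm_nonneg _).trans hB
  calc ‖A * B * C - 1‖ = ‖(A - 1) + A * (B - 1) + A * B * (C - 1)‖ := by noncomm_ring
    _ ≤ ‖A - 1‖ + ‖A‖ * ‖B - 1‖ + ‖A‖ * ‖B‖ * ‖C - 1‖ := by
        refine norm_add₃_le.trans (add_le_add_three le_rfl (norm_mul_le _ _) ?_)
        exact (norm_mul_le _ _).trans (by gcongr; exact norm_mul_le _ _)
    _ ≤ a + (1 + a) * b + (1 + a) * (1 + b) * c := by gcongr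

end NormedRing

section NormedCommRing

variable {R : Type*} [NormedCommRing R] [NormOneClass R] {ι : Type*}

lemma norm_prod_sub_one_le (s : Finset ι) {w : ι → R} {b : ι → ℝ}
    (hw : ∀ i ∈ s, ‖w i - 1‖ ≤ b i) : ‖∏ i ∈ s, w i - 1‖ ≤ ∏ i ∈ s, (1 + b i) - 1 := by
  induction s using Finset.cons_induction with
  | empty => simp
  | cons a s _ ih =>
    have hwa := hw a (mem_cons_self a s)
    have ih := ih fun i hi => hw i (mem_cons_of_mem hi)
    have hba : 0 ≤ b a := (norm_nonneg _).trans hwa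
    rw [prod_cons, prod_cons]
    calc ‖w a * ∏ i ∈ s, w i - 1‖ = ‖(w a - 1) * ∏ i ∈ s, w i + (∏ i ∈ s, w i - 1)‖ := by ring_nf
      _ ≤ ‖w a - 1‖ * ‖∏ i ∈ s, w i‖ + ‖∏ i ∈ s, w i - 1‖ :=
        (norm_add_le _ _).trans (add_le_add_left (norm_mul_le _ _) _)
      _ ≤ b a * (1 + (∏ i ∈ s, (1 + b i) - 1)) + (∏ i ∈ s, (1 + b i) - 1) := by
        gcongr
        exact norm_le_one_add_of_norm_sub_one_le ih
      _ = (1 + b a) * ∏ i ∈ s, (1 + b i) - 1 := by ring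

lemma norm_pow_sub_one_le {w : R} {t : ℝ} (hw : ‖w - 1‖ ≤ t) (p : ℕ) :
    ‖w ^ p - 1‖ ≤ (1 + t) ^ p - 1 := by
  simpa using norm_prod_sub_one_le (range p) (w := fun _ => w) fun _ _ => hw

lemma norm_one_add_pow_sub_one_le {z : R} {t : ℝ} (hz : ‖z‖ ≤ t) (p : ℕ) :
    ‖(1 + z) ^ p - 1‖ ≤ (1 + t) ^ p - 1 :=
  norm_pow_sub_one_le (by rwa [add_sub_cancel_left]) p

lemma norm_prod_pow_sub_one_le (s : Finset ι) {w : ι → R} {t : ℝ}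
    (hw : ∀ i ∈ s, ‖w i - 1‖ ≤ t) (k : ι → ℕ) :
    ‖∏ i ∈ s, w i ^ k i - 1‖ ≤ (1 + t) ^ (∑ i ∈ s, k i) - 1 := by
  rw [← prod_pow_eq_pow_sum]
  simpa using norm_prod_sub_one_le s fun i hi => norm_pow_sub_one_le (hw i hi) (k i)

end NormedCommRing

-- Convexity of `x ↦ x ^ q` on `[0, ∞)`, at `1 + ε t = (1 - ε) • 1 + ε • (1 + t)`.
lemma one_add_mul_pow_le {ε t : ℝ} (hε₀ : 0 ≤ ε) (hε₁ : ε ≤ 1) (ht : 0 ≤ t) (q : ℕ) :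
    (1 + ε * t) ^ q ≤ 1 + ε * ((1 + t) ^ q - 1) := by
  have := (convexOn_pow q).2 (x := 1) (y := 1 + t) (by simp) (Set.mem_Ici.2 (by linarith))
    (sub_nonneg.2 hε₁) hε₀ (by ring)
  simp only [smul_eq_mul, one_pow, mul_one] at this
  linear_combination this

lemma norm_div_natCast_le {𝕜 : Type*} [RCLike 𝕜] (z : 𝕜) (k : ℕ) :
    ‖z / k‖ ≤ ‖z‖ := by
  rcases k.eq_zero_or_pos with rfl | hk
  · simp
  · rw [norm_div, RCLike.norm_natCast]
    exact div_le_self (norm_nonneg z) (by exact_mod_cast hk)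

lemma norm_div_sub_sub_one_le {𝕜 : Type*} [NormedField 𝕜] {a b u : 𝕜} {δ ρ : ℝ}
    (hbu : ‖b - u‖ ≤ δ) (hρ : 0 < ρ) (hab : ρ < ‖a - b‖) :
    ‖(a - u) / (a - b) - 1‖ ≤ δ / ρ := by
  have hab₀ : a - b ≠ 0 := norm_pos_iff.1 (hρ.trans hab)
  rw [div_sub_one hab₀, sub_sub_sub_cancel_left, norm_div]
  exact div_le_div₀ ((norm_nonneg _).trans hbu) hbu hρ hab.le

section Separated

variable {ι : Type*} [Fintype ι] [DecidableEq ι] {x y : ι → ℂ} {δ ρ : ℝ}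

lemma norm_correction_le (α : ι → ℕ) (hρ : 0 < ρ) (hyx : ∀ j, ‖y j - x j‖ ≤ δ)
    (hsep1 : ∀ i j, i ≠ j → ρ < ‖y i - x j‖) (hsep2 : ∀ i j, i ≠ j → ρ < ‖y i - y j‖) (j : ι) :
    ‖(y j - x j) / (α j : ℂ) *
        ∑ l ∈ univ.erase j, (α l : ℂ) * (x l - y l) / ((y j - x l) * (y j - y l))‖ ≤
      ((∑ l ∈ univ.erase j, α l : ℕ) : ℝ) * (δ / ρ) ^ 2 := by
  have hδ : 0 ≤ δ := (norm_nonneg _).trans (hyx j)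
  have hterm : ∀ l ∈ univ.erase j,
      ‖(α l : ℂ) * (x l - y l) / ((y j - x l) * (y j - y l))‖ ≤ α l * (δ / ρ ^ 2) := by
    intro l hl
    have hjl := (ne_of_mem_erase hl).symm
    rw [mul_div_assoc, norm_mul, Complex.norm_natCast, norm_div, norm_mul, norm_sub_rev (x l), sq]
    gcongr
    exacts [hyx l, (hsep1 j l hjl).le, (hsep2 j l hjl).le]
  calc _ ≤ δ * ∑ l ∈ univ.erase j, α l * (δ / ρ ^ 2) :=
        (norm_mul_le _ _).trans <| mul_le_mul ((norm_div_natCast_le _ _).trans (hyx j))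
          ((norm_sum_le _ _).trans (sum_le_sum hterm)) (norm_nonneg _) hδ
    _ = _ := by rw [← sum_mul]; push_cast; ring

lemma norm_prod_div_pow_sub_one_le (α : ι → ℕ) (hρ : 0 < ρ) (hyx : ∀ j, ‖y j - x j‖ ≤ δ)
    (hsep2 : ∀ i j, i ≠ j → ρ < ‖y i - y j‖) (j : ι) :
    ‖∏ s ∈ univ.erase j, ((y j - x s) / (y j - y s)) ^ α s - 1‖ ≤
      (1 + δ / ρ) ^ (∑ s ∈ univ.erase j, α s) - 1 :=
  norm_prod_pow_sub_one_le _
    (fun s hs => norm_div_sub_sub_one_le (hyx s) hρ (hsep2 j s (ne_of_mem_erase hs).symm)) α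

end Separated

theorem stmt_19_general (m n : ℕ)
    (α : Fin m → ℕ) (hsum : ∑ j, α j = n)
    (x : Fin m → ℂ)
    (c d ε : ℝ) (hc : 0 < c) (hd2c : 0 < d - 2 * c) (hε0 : 0 ≤ ε) (hε1 : ε ≤ 1)
    (y : Fin m → ℂ) (hyx : ∀ j, ‖y j - x j‖ ≤ c * ε)
    (hsep1 : ∀ i j : Fin m, i ≠ j → d - 2 * c < ‖y i - x j‖)
    (hsep2 : ∀ i j : Fin m, i ≠ j → d - 2 * c < ‖y i - y j‖)
    (i j : Fin m) (hij : i ≠ j) :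
    ‖1 - ((y i - x j) / (y i - y j)) *
        (1 + ((y j - x j) / (α j : ℂ)) *
            ∑ l ∈ univ.erase j, (α l : ℂ) * (x l - y l) /
              ((y j - x l) * (y j - y l))) ^ (α j - 1) *
        ∏ s ∈ univ.erase j, ((y j - x s) / (y j - y s)) ^ (α s)‖ ≤
      ε * (c / (d - 2 * c) +
        (1 + c * ε / (d - 2 * c)) *
          (ε * ((1 + (n : ℝ) * (c / (d - 2 * c)) ^ 2) ^ (n - 1) - 1) +
            ((1 + c / (d - 2 * c)) ^ n - 1) *
              (1 + ε ^ 2 * ((1 + (n : ℝ) * (c / (d - 2 * c)) ^ 2) ^ (n - 1) - 1)))) := by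
  set C := c / (d - 2 * c) with hC
  have hC₀ : 0 ≤ C := by positivity
  have hδρ : c * ε / (d - 2 * c) = ε * C := by ring
  have hrest : ∑ l ∈ univ.erase j, α l ≤ n := hsum ▸ sum_le_sum_of_subset (erase_subset j univ)
  have hαj : α j ≤ n := hsum ▸ single_le_sum (fun _ _ => Nat.zero_le _) (mem_univ j)
  have hA : ‖(y i - x j) / (y i - y j) - 1‖ ≤ ε * C :=
    hδρ ▸ norm_div_sub_sub_one_le (hyx j) hd2c (hsep2 i j hij)
  have hw : ‖(y j - x j) / (α j : ℂ) * ∑ l ∈ univ.erase j, (α l : ℂ) * (x l - y l) /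
      ((y j - x l) * (y j - y l))‖ ≤ ε ^ 2 * (n * C ^ 2) := by
    refine (norm_correction_le α hd2c hyx hsep1 hsep2 j).trans ?_
    rw [hδρ, mul_pow, mul_left_comm]
    gcongr
  have hR := (norm_one_add_pow_sub_one_le hw (α j - 1)).trans <|
    (sub_le_sub_right (pow_le_pow_right₀ (le_add_of_nonneg_right (by positivity)) (Nat.sub_le_sub_right hαj 1)) 1).trans <|
    sub_le_iff_le_add'.2 (one_add_mul_pow_le (sq_nonneg ε) (pow_le_one₀ hε0 hε1) (by positivity) _)
  have hZ := (norm_prod_div_pow_sub_one_le α hd2c hyx hsep2 j).trans <|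
    (sub_le_sub_right (pow_le_pow_right₀ (le_add_of_nonneg_right (by positivity)) hrest) 1).trans <|
    sub_le_iff_le_add'.2 (hδρ ▸ one_add_mul_pow_le hε0 hε1 hC₀ n)
  rw [norm_sub_rev]
  refine (norm_mul_mul_sub_one_le hA hR hZ).trans_eq ?_
  simp only [hC]
  ring

/-- Combined estimate for `Y_{ij} = 1 − ((y_i − x_j)/(y_i − y_j))·R_j·Z_j`:
`|Y_{ij}| ≤ ε·[c/(d−2c) + (1 + cε/(d−2c))·(εN + M(1 + ε²N))]`. -/
theorem stmt_19 (m n : ℕ) (hm : 1 ≤ m) (hn : 1 ≤ n)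
    (α : Fin m → ℕ) (hα : ∀ i, 0 < α i) (hsum : ∑ j, α j = n)
    (x : Fin m → ℂ) (hx : Function.Injective x)
    (c d ε : ℝ) (hc : 0 < c) (hd2c : 0 < d - 2 * c) (hε0 : 0 ≤ ε) (hε1 : ε ≤ 1)
    (y : Fin m → ℂ) (hyx : ∀ j, ‖y j - x j‖ ≤ c * ε)
    (hsep1 : ∀ i j : Fin m, i ≠ j → d - 2 * c < ‖y i - x j‖)
    (hsep2 : ∀ i j : Fin m, i ≠ j → d - 2 * c < ‖y i - y j‖)
    (i j : Fin m) (hij : i ≠ j) :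
    ‖1 - ((y i - x j) / (y i - y j)) *
        (1 + ((y j - x j) / (α j : ℂ)) *
            ∑ l ∈ univ.erase j, (α l : ℂ) * (x l - y l) /
              ((y j - x l) * (y j - y l))) ^ (α j - 1) *
        ∏ s ∈ univ.erase j, ((y j - x s) / (y j - y s)) ^ (α s)‖ ≤
      ε * (c / (d - 2 * c) +
        (1 + c * ε / (d - 2 * c)) *
          (ε * ((1 + (n : ℝ) * (c / (d - 2 * c)) ^ 2) ^ (n - 1) - 1) +
            ((1 + c / (d - 2 * c)) ^ n - 1) *
              (1 + ε ^ 2 * ((1 + (n : ℝ) * (c / (d - 2 * c)) ^ 2) ^ (n - 1) - 1)))) :=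
  stmt_19_general m n α hsum x c d ε hc hd2c hε0 hε1 y hyx hsep1 hsep2 i j hij
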